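/- arXiv:2204.10273 — 5 statements merged into one kernel-verified Lean document; each statement's English description precedes it below -/
import Mathlib

section
/- Let U : A ⊗ B → C ⊗ D be a unitary between finite-dimensional Hilbert spaces. If the operator algebra U(L(A) ⊗ I_B)U† commutes with I_C ⊗ L(D), then for every unitary V on A there exists a unitary V' on C such that U(V ⊗ I_B)U† = V' ⊗ I_D. -/
/-!
`W = U (V ⊗ I_B) U†` is unitary and commutes with every `I_C ⊗ N`. Commuting with the
matrix units `I_C ⊗ E_{kl}` forces the entries of `W` to vanish off the `D`-diagonal and to be
independent of the `D`-index along it, i.e. `W = V' ⊗ I_D`; and `V'` is unitary because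
`V' ⊗ I_D` is (for `D ≠ 0`; when `D = 0` both sides are empty matrices).
-/

open Matrix Kronecker

namespace Matrix

variable {R : Type*} {l m n : Type*}

theorem kronecker_one_injective [Semiring R] [DecidableEq n] [Nonempty n] :
    Function.Injective fun A : Matrix l m R => A ⊗ₖ (1 : Matrix n n R) := by
  intro A B hAB
  obtain ⟨k⟩ := ‹Nonempty n›
  ext i j
  simpa using congr_fun₂ hAB (i, k) (j, k)

section

variable [Fintype m] [Fintype n] [DecidableEq m] [DecidableEq n]

theorem mul_one_kronecker_single_apply [Semiring R] (W : Matrix (l × n) (m × n) R)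
    (k k' : n) (x : l × n) (j : m) :
    (W * ((1 : Matrix m m R) ⊗ₖ single k k' 1) : Matrix (l × n) (m × n) R) x (j, k') =
      W x (j, k) := by
  simp [mul_apply, Fintype.sum_prod_type, one_apply, single_apply]

theorem one_kronecker_single_mul_apply [Semiring R] (W : Matrix (m × n) (l × n) R)
    (k k' : n) (i : m) (x : n) (y : l × n) :
    (((1 : Matrix m m R) ⊗ₖ single k k' 1) * W : Matrix (m × n) (l × n) R) (i, x) y =
      if x = k then W (i, k') y else 0 := by
  simp [mul_apply, Fintype.sum_prod_type, one_apply, single_apply, ite_and, eq_comm]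

theorem exists_eq_kronecker_one_of_forall_commute [Semiring R] (W : Matrix (m × n) (m × n) R)
    (hW : ∀ N : Matrix n n R, Commute W (1 ⊗ₖ N)) :
    ∃ W' : Matrix m m R, W = W' ⊗ₖ 1 := by
  rcases isEmpty_or_nonempty n with hn | ⟨⟨n₀⟩⟩
  · exact ⟨0, Subsingleton.elim _ _⟩
  have entry (i j : m) (x k : n) :
      W (i, x) (j, k) = if x = k then W (i, n₀) (j, n₀) else 0 := by
    have h := congr_fun₂ (hW (single k n₀ 1)).eq (i, x) (j, n₀)
    rwa [mul_one_kronecker_single_apply, one_kronecker_single_mul_apply] at h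
  refine ⟨of fun i j => W (i, n₀) (j, n₀), ?_⟩
  ext ⟨i, x⟩ ⟨j, k⟩
  rw [entry]
  simp [one_apply]

theorem kronecker_one_mem_unitaryGroup_iff [CommRing R] [StarRing R] [Nonempty n]
    {A : Matrix m m R} :
    A ⊗ₖ (1 : Matrix n n R) ∈ unitaryGroup (m × n) R ↔ A ∈ unitaryGroup m R := by
  refine ⟨fun hA => ?_, fun hA => kronecker_mem_unitary hA (one_mem _)⟩
  rw [mem_unitaryGroup_iff, star_eq_conjTranspose, conjTranspose_kronecker, conjTranspose_one,
    ← mul_kronecker_mul, one_mul, ← one_kronecker_one] at hA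
  exact mem_unitaryGroup_iff.mpr (kronecker_one_injective hA)

theorem mul_mul_conjTranspose_mem_unitaryGroup [CommRing R] [StarRing R]
    (U : Matrix m n R) (hU1 : U * Uᴴ = 1) (hU2 : Uᴴ * U = 1) {X : Matrix n n R}
    (hX : X ∈ unitaryGroup n R) : U * X * Uᴴ ∈ unitaryGroup m R := by
  rw [mem_unitaryGroup_iff, star_eq_conjTranspose] at hX ⊢
  calc U * X * Uᴴ * (U * X * Uᴴ)ᴴ = U * X * (Uᴴ * U) * Xᴴ * Uᴴ := by
        simp only [conjTranspose_mul, conjTranspose_conjTranspose, Matrix.mul_assoc]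
    _ = 1 := by rw [hU2, Matrix.mul_one, Matrix.mul_assoc U, hX, Matrix.mul_one, hU1]

end

end Matrix

/-- If `U(L(A) ⊗ I_B)U†` commutes with `I_C ⊗ L(D)`, then for every unitary `V` on
`A` there is a unitary `V'` on `C` with `U (V ⊗ I_B) U† = V' ⊗ I_D`. -/
theorem stmt0 {a b c d : Type*} [Fintype a] [Fintype b] [Fintype c] [Fintype d]
    [DecidableEq a] [DecidableEq b] [DecidableEq c] [DecidableEq d]
    (U : Matrix (c × d) (a × b) ℂ)
    (hU1 : U * Uᴴ = 1) (hU2 : Uᴴ * U = 1)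
    (hcomm : ∀ (M : Matrix a a ℂ) (N : Matrix d d ℂ),
      Commute (U * (M ⊗ₖ (1 : Matrix b b ℂ)) * Uᴴ) ((1 : Matrix c c ℂ) ⊗ₖ N)) :
    ∀ V ∈ Matrix.unitaryGroup a ℂ, ∃ V' ∈ Matrix.unitaryGroup c ℂ,
      U * (V ⊗ₖ (1 : Matrix b b ℂ)) * Uᴴ = V' ⊗ₖ (1 : Matrix d d ℂ) := by
  intro V hV
  rcases isEmpty_or_nonempty d with hd | hd
  · exact ⟨1, one_mem _, Subsingleton.elim _ _⟩
  obtain ⟨V', hV'⟩ := exists_eq_kronecker_one_of_forall_commute _ (hcomm V)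
  refine ⟨V', ?_, hV'⟩
  rw [← kronecker_one_mem_unitaryGroup_iff (n := d), ← hV']
  exact mul_mul_conjTranspose_mem_unitaryGroup U hU1 hU2 (kronecker_mem_unitary hV (one_mem _))
end

section
/- Let U : A ⊗ B ⊗ C → D ⊗ E be a unitary between finite-dimensional Hilbert spaces. Then U(L(A) ⊗ I_{B⊗C})U† and U(I_A ⊗ L(B) ⊗ I_C)U† both commute with I_D ⊗ L(E) if and only if U(L(A⊗B) ⊗ I_C)U† commutes with I_D ⊗ L(E). (Atomicity, input direction.) -/
open Matrix Kronecker

lemma sum_kron {m n p q ι : Type*} (s : Finset ι) (f : ι → Matrix m n ℂ)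
    (B : Matrix p q ℂ) : (∑ i ∈ s, f i) ⊗ₖ B = ∑ i ∈ s, (f i ⊗ₖ B) := by
  ext ⟨x,y⟩ ⟨u,v⟩
  simp [Matrix.kroneckerMap_apply, Matrix.sum_apply, Finset.sum_mul]

lemma std_smul {a : Type*} [DecidableEq a] (i j : a) (z : ℂ) :
    Matrix.single i j z = z • Matrix.single i j (1 : ℂ) := by
  ext x y
  simp [Matrix.single]

lemma std_kron {a b : Type*} [DecidableEq a] [DecidableEq b]
    (p q : a × b) :
    (Matrix.single p q (1 : ℂ)) =
      (Matrix.single p.1 q.1 (1 : ℂ)) ⊗ₖ (Matrix.single p.2 q.2 (1 : ℂ)) := by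
  ext ⟨x, y⟩ ⟨u, v⟩
  simp [Matrix.single, Matrix.kroneckerMap_apply, Prod.ext_iff, ite_and]
  aesop

/-- Atomicity, input direction: `U(L(A) ⊗ I_{B⊗C})U†` and
`U(I_A ⊗ L(B) ⊗ I_C)U†` both commute with `I_D ⊗ L(E)` iff `U(L(A⊗B) ⊗ I_C)U†` does. -/
theorem stmt4 {a b c d e : Type*} [Fintype a] [Fintype b] [Fintype c] [Fintype d] [Fintype e]
    [DecidableEq a] [DecidableEq b] [DecidableEq c] [DecidableEq d] [DecidableEq e]
    (U : Matrix (d × e) ((a × b) × c) ℂ)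
    (hU1 : U * Uᴴ = 1) (hU2 : Uᴴ * U = 1) :
    ((∀ (M : Matrix a a ℂ) (R : Matrix e e ℂ),
        Commute (U * ((M ⊗ₖ (1 : Matrix b b ℂ)) ⊗ₖ (1 : Matrix c c ℂ)) * Uᴴ)
          ((1 : Matrix d d ℂ) ⊗ₖ R)) ∧
      (∀ (N : Matrix b b ℂ) (R : Matrix e e ℂ),
        Commute (U * (((1 : Matrix a a ℂ) ⊗ₖ N) ⊗ₖ (1 : Matrix c c ℂ)) * Uᴴ)
          ((1 : Matrix d d ℂ) ⊗ₖ R))) ↔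
    (∀ (Q : Matrix (a × b) (a × b) ℂ) (R : Matrix e e ℂ),
        Commute (U * (Q ⊗ₖ (1 : Matrix c c ℂ)) * Uᴴ) ((1 : Matrix d d ℂ) ⊗ₖ R)) := by
  constructor
  · rintro ⟨hM, hN⟩ Q R
    have key : ∀ (M : Matrix a a ℂ) (N : Matrix b b ℂ),
        Commute (U * ((M ⊗ₖ N) ⊗ₖ (1 : Matrix c c ℂ)) * Uᴴ) ((1 : Matrix d d ℂ) ⊗ₖ R) := by
      intro M N
      have h1 : (M ⊗ₖ N) ⊗ₖ (1 : Matrix c c ℂ) =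
          ((M ⊗ₖ (1 : Matrix b b ℂ)) ⊗ₖ (1 : Matrix c c ℂ)) *
          (((1 : Matrix a a ℂ) ⊗ₖ N) ⊗ₖ (1 : Matrix c c ℂ)) := by
        rw [← Matrix.mul_kronecker_mul, ← Matrix.mul_kronecker_mul]
        simp
      have h2 : U * ((M ⊗ₖ N) ⊗ₖ (1 : Matrix c c ℂ)) * Uᴴ =
          (U * ((M ⊗ₖ (1 : Matrix b b ℂ)) ⊗ₖ (1 : Matrix c c ℂ)) * Uᴴ) *
          (U * (((1 : Matrix a a ℂ) ⊗ₖ N) ⊗ₖ (1 : Matrix c c ℂ)) * Uᴴ) := by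
        rw [h1]
        simp only [Matrix.mul_assoc]
        rw [← Matrix.mul_assoc Uᴴ U, hU2, Matrix.one_mul]
      rw [h2]
      exact (hM M R).mul_left (hN N R)
    have hQ2 : Q ⊗ₖ (1 : Matrix c c ℂ) =
        ∑ p : a × b, ∑ q : a × b, Q p q •
          ((Matrix.single p.1 q.1 (1:ℂ) ⊗ₖ Matrix.single p.2 q.2 (1:ℂ))
            ⊗ₖ (1 : Matrix c c ℂ)) := by
      conv_lhs => rw [Matrix.matrix_eq_sum_single Q]
      rw [sum_kron]
      refine Finset.sum_congr rfl fun p _ => ?_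
      rw [sum_kron]
      refine Finset.sum_congr rfl fun q _ => ?_
      rw [std_smul, std_kron, Matrix.smul_kronecker]
    rw [hQ2]
    simp only [Matrix.mul_sum, Matrix.sum_mul, Matrix.mul_smul, Matrix.smul_mul]
    refine Commute.sum_left _ _ _ fun p _ => Commute.sum_left _ _ _ fun q _ => ?_
    exact (key _ _).smul_left _
  · intro h
    exact ⟨fun M R => h (M ⊗ₖ (1 : Matrix b b ℂ)) R,
           fun N R => h ((1 : Matrix a a ℂ) ⊗ₖ N) R⟩
end

section
/- If f : A → B follows a route λ and g : B → C follows a route μ (with respect to matching sectorizations of B), then g ∘ f follows the route given by the Boolean matrix product μ ∘ λ, i.e. (μλ)(i,k) = max_j min(μ(j,k), λ(i,j)). -/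
open Matrix

/-- If `f` follows `λ` and `g` follows `μ`, then `g ∘ f` follows the Boolean
matrix product `μλ`, where `(μλ)(i,k) = max_j min(μ(j,k), λ(i,j))`. -/
theorem stmt7 {a b c I J K : Type*} [Fintype a] [Fintype b] [Fintype c] [DecidableEq a] [DecidableEq b] [DecidableEq c]
    [Fintype I] [Fintype J] [Fintype K] [DecidableEq I] [DecidableEq J] [DecidableEq K]
    (f : Matrix b a ℂ) (g : Matrix c b ℂ)
    (πA : I → Matrix a a ℂ) (πB : J → Matrix b b ℂ) (πC : K → Matrix c c ℂ)
    (hAorth : ∀ i i', πA i * πA i' = if i = i' then πA i else 0)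
    (hAcomp : ∑ i, πA i = 1)
    (hBorth : ∀ j j', πB j * πB j' = if j = j' then πB j else 0)
    (hBcomp : ∑ j, πB j = 1)
    (hCorth : ∀ k k', πC k * πC k' = if k = k' then πC k else 0)
    (hCcomp : ∑ k, πC k = 1)
    (lam : I → J → Bool) (mu : J → K → Bool)
    (hf : ∀ i j, lam i j = false → πB j * f * πA i = 0)
    (hg : ∀ j k, mu j k = false → πC k * g * πB j = 0) :
    ∀ i k, (∀ j, min (mu j k) (lam i j) = false) → πC k * (g * f) * πA i = 0 := by
  intro i k h
  have key : πC k * (g * f) * πA i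
      = ∑ j, (πC k * g * πB j) * (πB j * f * πA i) := by
    calc πC k * (g * f) * πA i
        = πC k * g * (∑ j, πB j) * f * πA i := by
          rw [hBcomp, Matrix.mul_one, Matrix.mul_assoc (πC k) g f]
      _ = ∑ j, πC k * g * πB j * f * πA i := by
          rw [Matrix.mul_sum, Matrix.sum_mul, Matrix.sum_mul]
      _ = ∑ j, (πC k * g * πB j) * (πB j * f * πA i) := by
          refine Finset.sum_congr rfl fun j _ => ?_
          have hbb := hBorth j j
          rw [if_pos rfl] at hbb
          calc πC k * g * πB j * f * πA i
              = πC k * g * (πB j * πB j) * f * πA i := by rw [hbb]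
            _ = (πC k * g * πB j) * (πB j * f * πA i) := by
                simp only [Matrix.mul_assoc]
  rw [key]
  apply Finset.sum_eq_zero
  intro j _
  rcases min_eq_bot.mp (h j) with hm | hl
  · rw [hg j k hm, Matrix.zero_mul]
  · rw [hf i j hl, Matrix.mul_zero]
end

section
/- Let A be a finite-dimensional Hilbert space decomposed as A = A_0 ⊕ A_0^⊥ with dim A_0 ≥ 2. The set of operators of the form V_0 ⊕ (λ · I) — where V_0 is unitary on A_0 that admits eigenvector with eigenvalue λ — together with taking complex linear combinations spans the algebra L(A_0) ⊕ ℂ·I_{A_0^⊥} = { M ⊕ a I : M ∈ L(A_0), a ∈ ℂ }. -/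
/-!
The span contains `V ⊕ λ I` and `V ⊕ μ I` for a unitary `V` with two distinct eigenvalues
`λ ≠ μ` (a sign matrix, which needs `dim A₀ ≥ 2`); their difference isolates `0 ⊕ I`.
Subtracting multiples of it from `V ⊕ λ I` gives `V ⊕ 0` for every unitary `V`, since every
`V` has an eigenvalue, and unitaries span the C⋆-algebra `L(A₀)`.
-/

open Matrix

theorem Matrix.fromBlocks_sub {l m n o α : Type*} [Sub α] (A : Matrix n l α) (B : Matrix n m α)
    (C : Matrix o l α) (D : Matrix o m α) (A' : Matrix n l α) (B' : Matrix n m α)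
    (C' : Matrix o l α) (D' : Matrix o m α) :
    fromBlocks A B C D - fromBlocks A' B' C' D' = fromBlocks (A - A') (B - B') (C - C') (D - D') := by
  ext (i | i) (j | j) <;> rfl

section

variable {m n : Type*} [Fintype m] [DecidableEq m]

theorem Matrix.diagonal_mem_unitaryGroup {α : Type*} [CommRing α] [StarRing α] {d : m → α}
    (hd : ∀ i, star (d i) * d i = 1) : diagonal d ∈ unitaryGroup m α := by
  rw [mem_unitaryGroup_iff', star_eq_conjTranspose, diagonal_conjTranspose,
    diagonal_mul_diagonal, ← diagonal_one]
  exact congrArg diagonal (funext hd)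

theorem Matrix.exists_mem_unitaryGroup_eigenvalues_one_neg_one (h : 1 < Fintype.card m) :
    ∃ V ∈ unitaryGroup m ℂ, ∃ x y : m → ℂ,
      x ≠ 0 ∧ V *ᵥ x = (1 : ℂ) • x ∧ y ≠ 0 ∧ V *ᵥ y = (-1 : ℂ) • y := by
  obtain ⟨i, j, hij⟩ := Fintype.exists_pair_of_one_lt_card h
  refine ⟨diagonal fun k => if k = i then 1 else -1,
    diagonal_mem_unitaryGroup fun k => by split_ifs <;> simp,
    Pi.single i 1, Pi.single j 1, ?_, ?_, ?_, ?_⟩ <;> simp [hij.symm, Pi.single_neg]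

open scoped Matrix.Norms.L2Operator in
theorem fromBlocks_zero_mem_of_forall_unitary {S : Submodule ℂ (Matrix (m ⊕ n) (m ⊕ n) ℂ)}
    (hS : ∀ V ∈ unitaryGroup m ℂ, fromBlocks V 0 0 0 ∈ S) (M : Matrix m m ℂ) :
    fromBlocks M 0 0 0 ∈ S := by
  have hM : M ∈ Submodule.span ℂ (unitaryGroup m ℂ : Set (Matrix m m ℂ)) := by
    rw [CStarAlgebra.span_unitary]
    trivial
  induction hM using Submodule.span_induction with
  | mem V hV => exact hS V hV
  | zero => simpa only [fromBlocks_zero] using S.zero_mem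
  | add A B _ _ hA hB => simpa only [fromBlocks_add, add_zero] using S.add_mem hA hB
  | smul c A _ hA => simpa only [fromBlocks_smul, smul_zero] using S.smul_mem c hA

variable [DecidableEq n]

variable (m n) in
def eigenBlockUnitaries : Set (Matrix (m ⊕ n) (m ⊕ n) ℂ) :=
  {W | ∃ V ∈ unitaryGroup m ℂ, ∃ lam : ℂ,
    (∃ x : m → ℂ, x ≠ 0 ∧ V *ᵥ x = lam • x) ∧ W = fromBlocks V 0 0 (lam • 1)}

theorem fromBlocks_zero_one_mem_span_eigenBlockUnitaries {V : Matrix m m ℂ}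
    (hV : V ∈ unitaryGroup m ℂ) {lam mu : ℂ} (hne : lam ≠ mu) {x y : m → ℂ}
    (hx : x ≠ 0) (hVx : V *ᵥ x = lam • x) (hy : y ≠ 0) (hVy : V *ᵥ y = mu • y) :
    fromBlocks 0 0 0 1 ∈ Submodule.span ℂ (eigenBlockUnitaries m n) := by
  have hdiff : fromBlocks (0 : Matrix m m ℂ) 0 0 (1 : Matrix n n ℂ) =
      (lam - mu)⁻¹ • (fromBlocks V 0 0 (lam • 1) - fromBlocks V 0 0 (mu • 1)) := by
    rw [fromBlocks_sub, ← sub_smul, fromBlocks_smul, inv_smul_smul₀ (sub_ne_zero.mpr hne)]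
    simp
  rw [hdiff]
  exact Submodule.smul_mem _ _ <| Submodule.sub_mem _
    (Submodule.subset_span ⟨V, hV, lam, ⟨x, hx, hVx⟩, rfl⟩)
    (Submodule.subset_span ⟨V, hV, mu, ⟨y, hy, hVy⟩, rfl⟩)

theorem fromBlocks_unitary_zero_mem_span_eigenBlockUnitaries [Nonempty m]
    (hE : fromBlocks 0 0 0 1 ∈ Submodule.span ℂ (eigenBlockUnitaries m n))
    {V : Matrix m m ℂ} (hV : V ∈ unitaryGroup m ℂ) :
    fromBlocks V 0 0 0 ∈ Submodule.span ℂ (eigenBlockUnitaries m n) := by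
  obtain ⟨lam, hlam⟩ := Module.End.exists_eigenvalue (mulVecLin V)
  obtain ⟨x, hx⟩ := hlam.exists_hasEigenvector
  have hsplit : fromBlocks V 0 0 (0 : Matrix n n ℂ) =
      fromBlocks V 0 0 (lam • 1) - lam • fromBlocks 0 0 0 1 := by
    simp [fromBlocks_smul, fromBlocks_sub]
  rw [hsplit]
  exact Submodule.sub_mem _
    (Submodule.subset_span ⟨V, hV, lam, ⟨x, hx.2, hx.apply_eq_smul⟩, rfl⟩)
    (Submodule.smul_mem _ _ hE)

end

theorem stmt16_general {a0 a1 : Type*} [Fintype a0] [DecidableEq a0] [DecidableEq a1]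
    (hdim : 2 ≤ Fintype.card a0) :
    Submodule.span ℂ
      {W : Matrix (a0 ⊕ a1) (a0 ⊕ a1) ℂ |
        ∃ V0 ∈ Matrix.unitaryGroup a0 ℂ, ∃ lam : ℂ,
          (∃ x : a0 → ℂ, x ≠ 0 ∧ Matrix.mulVec V0 x = lam • x) ∧
          W = Matrix.fromBlocks V0 0 0 (lam • (1 : Matrix a1 a1 ℂ))} =
    Submodule.span ℂ
      {W : Matrix (a0 ⊕ a1) (a0 ⊕ a1) ℂ |
        ∃ (M : Matrix a0 a0 ℂ) (c : ℂ),
          W = Matrix.fromBlocks M 0 0 (c • (1 : Matrix a1 a1 ℂ))} := by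
  change Submodule.span ℂ (eigenBlockUnitaries a0 a1) = _
  refine le_antisymm (Submodule.span_mono ?_) (Submodule.span_le.mpr ?_)
  · rintro _ ⟨V, -, lam, -, rfl⟩
    exact ⟨V, lam, rfl⟩
  · rintro _ ⟨M, c, rfl⟩
    obtain ⟨V, hV, x, y, hx, hVx, hy, hVy⟩ :=
      exists_mem_unitaryGroup_eigenvalues_one_neg_one hdim
    have hE := fromBlocks_zero_one_mem_span_eigenBlockUnitaries (n := a1) hV
      (by norm_num) hx hVx hy hVy
    have : Nonempty a0 := Fintype.card_pos_iff.mp (by omega)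
    have hsplit : fromBlocks M 0 0 (c • (1 : Matrix a1 a1 ℂ)) =
        fromBlocks M 0 0 0 + c • fromBlocks 0 0 0 1 := by
      simp [fromBlocks_smul, fromBlocks_add]
    rw [hsplit]
    exact Submodule.add_mem _
      (fromBlocks_zero_mem_of_forall_unitary
        (fun _ hU => fromBlocks_unitary_zero_mem_span_eigenBlockUnitaries hE hU) M)
      (Submodule.smul_mem _ _ hE)

/-- For `dim A_0 ≥ 2`, the operators `V_0 ⊕ λ·I` (with `V_0` unitary on `A_0`
having eigenvalue `λ`) span `{ M ⊕ a·I : M ∈ L(A_0), a ∈ ℂ }`. -/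
theorem stmt16 {a0 a1 : Type*} [Fintype a0] [Fintype a1] [DecidableEq a0] [DecidableEq a1]
    (hdim : 2 ≤ Fintype.card a0) :
    Submodule.span ℂ
      {W : Matrix (a0 ⊕ a1) (a0 ⊕ a1) ℂ |
        ∃ V0 ∈ Matrix.unitaryGroup a0 ℂ, ∃ lam : ℂ,
          (∃ x : a0 → ℂ, x ≠ 0 ∧ Matrix.mulVec V0 x = lam • x) ∧
          W = Matrix.fromBlocks V0 0 0 (lam • (1 : Matrix a1 a1 ℂ))} =
    Submodule.span ℂ
      {W : Matrix (a0 ⊕ a1) (a0 ⊕ a1) ℂ |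
        ∃ (M : Matrix a0 a0 ℂ) (c : ℂ),
          W = Matrix.fromBlocks M 0 0 (c • (1 : Matrix a1 a1 ℂ))} :=
  stmt16_general hdim
end

section
/- Let U : A ⊗ B → C ⊗ D be unitary and suppose U(L(A) ⊗ I_B)U† commutes with I_C ⊗ L(D). Then for every quantum channel Φ on A (a completely positive trace-preserving map, with Kraus operators in L(A)), Tr_C ∘ 𝒰 ∘ (Φ ⊗ id_B) = Tr_C ∘ 𝒰, where 𝒰(ρ) = UρU†. (Commuting algebras imply no signalling.) -/
open Matrix Kronecker

lemma stmt17_aux {c d : Type*} [Fintype c] [Fintype d] [DecidableEq c] [DecidableEq d]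
    (X : Matrix (c × d) (c × d) ℂ) (p q : d) :
    ∑ k : c, X (k, p) (k, q) =
      Matrix.trace (X * ((1 : Matrix c c ℂ) ⊗ₖ Matrix.single q p (1 : ℂ))) := by
  simp only [Matrix.trace, Matrix.diag, Matrix.mul_apply, Matrix.kroneckerMap_apply,
    Matrix.one_apply, Matrix.single, Matrix.of_apply, Fintype.sum_prod_type,
    mul_ite, ite_mul, mul_one, mul_zero, zero_mul, one_mul]
  simp [ite_and, Finset.sum_ite_eq, Finset.sum_ite_eq']

/-- If `U(L(A) ⊗ I_B)U†` commutes with `I_C ⊗ L(D)`, then for every CPTP map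
`Φ` on `A` given by Kraus operators, `Tr_C ∘ 𝒰 ∘ (Φ ⊗ id_B) = Tr_C ∘ 𝒰`. -/
theorem stmt17 {a b c d ι : Type*} [Fintype a] [Fintype b] [Fintype c] [Fintype d] [Fintype ι]
    [DecidableEq a] [DecidableEq b] [DecidableEq c] [DecidableEq d]
    (U : Matrix (c × d) (a × b) ℂ)
    (hU1 : U * Uᴴ = 1) (hU2 : Uᴴ * U = 1)
    (hcomm : ∀ (M : Matrix a a ℂ) (N : Matrix d d ℂ),
      Commute (U * (M ⊗ₖ (1 : Matrix b b ℂ)) * Uᴴ) ((1 : Matrix c c ℂ) ⊗ₖ N))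
    (K : ι → Matrix a a ℂ) (hK : ∑ i, (K i)ᴴ * K i = 1) :
    ∀ ρ : Matrix (a × b) (a × b) ℂ,
      (fun (p q : d) => ∑ k : c,
          (U * (∑ i, (K i ⊗ₖ (1 : Matrix b b ℂ)) * ρ * (K i ⊗ₖ (1 : Matrix b b ℂ))ᴴ) * Uᴴ)
            (k, p) (k, q)) =
      (fun (p q : d) => ∑ k : c, (U * ρ * Uᴴ) (k, p) (k, q)) := by
  intro ρ
  funext p q
  rw [stmt17_aux, stmt17_aux]
  set N : Matrix d d ℂ := Matrix.single q p (1 : ℂ) with hN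
  set E : Matrix (c × d) (c × d) ℂ := (1 : Matrix c c ℂ) ⊗ₖ N with hE
  -- key identity per Kraus operator
  have key : ∀ i : ι,
      Matrix.trace (U * ((K i ⊗ₖ (1 : Matrix b b ℂ)) * ρ * (K i ⊗ₖ (1 : Matrix b b ℂ))ᴴ) * Uᴴ * E)
      = Matrix.trace ((Uᴴ * E * U * (((K i)ᴴ * K i) ⊗ₖ (1 : Matrix b b ℂ))) * ρ) := by
    intro i
    have hKH : (K i ⊗ₖ (1 : Matrix b b ℂ))ᴴ = (K i)ᴴ ⊗ₖ (1 : Matrix b b ℂ) := by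
      ext ⟨k, l⟩ ⟨m, n⟩
      simp [Matrix.conjTranspose_apply, Matrix.one_apply, apply_ite (star : ℂ → ℂ), eq_comm]
    have hc := (hcomm (K i)ᴴ N).eq
    -- ((K i)ᴴ ⊗ 1) * Uᴴ * E = Uᴴ * E * U * ((K i)ᴴ ⊗ 1) * Uᴴ
    have h1 : ((K i)ᴴ ⊗ₖ (1 : Matrix b b ℂ)) * Uᴴ * E
        = Uᴴ * E * U * ((K i)ᴴ ⊗ₖ (1 : Matrix b b ℂ)) * Uᴴ := by
      have h2 := congrArg (fun X => Uᴴ * X) hc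
      simp only at h2
      calc ((K i)ᴴ ⊗ₖ (1 : Matrix b b ℂ)) * Uᴴ * E
          = Uᴴ * U * ((K i)ᴴ ⊗ₖ (1 : Matrix b b ℂ)) * Uᴴ * E := by rw [hU2, Matrix.one_mul]
        _ = Uᴴ * (U * ((K i)ᴴ ⊗ₖ (1 : Matrix b b ℂ)) * Uᴴ * E) := by
            simp only [Matrix.mul_assoc]
        _ = Uᴴ * (E * (U * ((K i)ᴴ ⊗ₖ (1 : Matrix b b ℂ)) * Uᴴ)) := by rw [hc]
        _ = Uᴴ * E * U * ((K i)ᴴ ⊗ₖ (1 : Matrix b b ℂ)) * Uᴴ := by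
            simp only [Matrix.mul_assoc]
    rw [hKH]
    calc Matrix.trace (U * ((K i ⊗ₖ (1 : Matrix b b ℂ)) * ρ * ((K i)ᴴ ⊗ₖ (1 : Matrix b b ℂ))) * Uᴴ * E)
        = Matrix.trace ((U * (K i ⊗ₖ (1 : Matrix b b ℂ)) * ρ) * (((K i)ᴴ ⊗ₖ (1 : Matrix b b ℂ)) * Uᴴ * E)) := by
          simp only [Matrix.mul_assoc]
      _ = Matrix.trace ((((K i)ᴴ ⊗ₖ (1 : Matrix b b ℂ)) * Uᴴ * E) * (U * (K i ⊗ₖ (1 : Matrix b b ℂ)) * ρ)) :=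
          (Matrix.trace_mul_comm _ _)
      _ = Matrix.trace ((Uᴴ * E * U * ((K i)ᴴ ⊗ₖ (1 : Matrix b b ℂ)) * Uᴴ) * (U * (K i ⊗ₖ (1 : Matrix b b ℂ)) * ρ)) := by
          rw [h1]
      _ = Matrix.trace (Uᴴ * E * U * (((K i)ᴴ ⊗ₖ (1 : Matrix b b ℂ)) * (Uᴴ * U) * (K i ⊗ₖ (1 : Matrix b b ℂ))) * ρ) := by
          simp only [Matrix.mul_assoc]
      _ = Matrix.trace ((Uᴴ * E * U * (((K i)ᴴ * K i) ⊗ₖ (1 : Matrix b b ℂ))) * ρ) := by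
          rw [hU2, Matrix.mul_one, ← Matrix.mul_kronecker_mul, Matrix.one_mul]
  -- sum over i
  calc Matrix.trace (U * (∑ i, (K i ⊗ₖ (1 : Matrix b b ℂ)) * ρ * (K i ⊗ₖ (1 : Matrix b b ℂ))ᴴ) * Uᴴ * E)
      = ∑ i, Matrix.trace (U * ((K i ⊗ₖ (1 : Matrix b b ℂ)) * ρ * (K i ⊗ₖ (1 : Matrix b b ℂ))ᴴ) * Uᴴ * E) := by
        rw [Matrix.mul_sum, Matrix.sum_mul, Matrix.sum_mul, Matrix.trace_sum]
    _ = ∑ i, Matrix.trace ((Uᴴ * E * U * (((K i)ᴴ * K i) ⊗ₖ (1 : Matrix b b ℂ))) * ρ) := by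
        exact Finset.sum_congr rfl fun i _ => key i
    _ = Matrix.trace ((Uᴴ * E * U * ((∑ i, (K i)ᴴ * K i) ⊗ₖ (1 : Matrix b b ℂ))) * ρ) := by
        have hsum : ∑ i, (((K i)ᴴ * K i) ⊗ₖ (1 : Matrix b b ℂ))
            = (∑ i, (K i)ᴴ * K i) ⊗ₖ (1 : Matrix b b ℂ) := by
          ext ⟨k, l⟩ ⟨m, n⟩
          simp [Matrix.sum_apply, Finset.sum_mul]
        rw [← Matrix.trace_sum, ← Matrix.sum_mul, ← Matrix.mul_sum, hsum]
    _ = Matrix.trace (U * ρ * Uᴴ * E) := by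
        rw [hK, Matrix.one_kronecker_one, Matrix.mul_one]
        calc Matrix.trace (Uᴴ * E * U * ρ)
            = Matrix.trace ((Uᴴ * E) * (U * ρ)) := by simp only [Matrix.mul_assoc]
          _ = Matrix.trace ((U * ρ) * (Uᴴ * E)) := Matrix.trace_mul_comm _ _
          _ = Matrix.trace (U * ρ * Uᴴ * E) := by simp only [Matrix.mul_assoc]
end
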